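/- Let the memory recurrent matrix V_m be the N_m×N_m cyclic permutation matrix C (ones on the subdiagonal and a 1 in the top-right corner), let O and W_h be N_h×N_h real matrices, W_m an N_h×N_m real matrix, α, β reals, and D a diagonal N_h×N_h real matrix. Then the spectral radius of the ResRMN Jacobian J = [[C, 0], [β·D·W_m·C, α·O + β·D·W_h]] satisfies ρ(J) ≥ 1; i.e. the ResRMN with a cyclic orthogonal memory reservoir always operates with spectral radius at least 1 (at the edge of stability), regardless of the tuning of the non-linear module. -/

import Mathlib

open Matrix

/-- The cyclic permutation matrix of size `N`: ones on the subdiagonal and a single `1`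
in the top-right corner, i.e. `C i j = 1` iff `i ≡ j + 1 (mod N)`. -/
def cyclicMatrix (N : ℕ) : Matrix (Fin N) (Fin N) ℝ :=
  Matrix.of fun i j => if (i : ℕ) = ((j : ℕ) + 1) % N then 1 else 0

/-- The set of complex eigenvalues of a real square matrix. -/
noncomputable def realMatrixSpec {n : Type*} [Fintype n] [DecidableEq n]
    (M : Matrix n n ℝ) : Set ℂ :=
  {μ : ℂ | ((M.map (Complex.ofReal)) - μ • (1 : Matrix n n ℂ)).det = 0}

/-- The spectral radius of a real square matrix: the maximum (supremum) of the
absolute values of its complex eigenvalues. -/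
noncomputable def realMatrixSpecRad {n : Type*} [Fintype n] [DecidableEq n]
    (M : Matrix n n ℝ) : ℝ :=
  sSup ((fun z : ℂ => ‖z‖) '' realMatrixSpec M)

/-! The all-ones vector is fixed by `C`, so `1` is an eigenvalue of `C`; and the spectrum of a
block lower triangular matrix is the union of the spectra of its diagonal blocks, so `1` is an
eigenvalue of `J` too. -/

section Spectrum

variable {n : Type*} [Fintype n] [DecidableEq n]

theorem realMatrixSpec_finite (M : Matrix n n ℝ) : (realMatrixSpec M).Finite := by
  refine (Polynomial.finite_setOfPred_isRoot
    (M.map Complex.ofReal).charpoly_monic.ne_zero).subset ?_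
  intro μ hμ
  rw [Set.mem_ofPred_eq, Polynomial.IsRoot, eval_charpoly, ← neg_sub, det_neg, scalar_apply,
    ← smul_one_eq_diagonal, hμ.out, mul_zero]

theorem norm_le_realMatrixSpecRad {M : Matrix n n ℝ} {μ : ℂ} (hμ : μ ∈ realMatrixSpec M) :
    ‖μ‖ ≤ realMatrixSpecRad M :=
  le_csSup ((realMatrixSpec_finite M).image _).bddAbove ⟨μ, hμ, rfl⟩

theorem ofReal_mem_realMatrixSpec_iff {M : Matrix n n ℝ} {μ : ℝ} :
    (μ : ℂ) ∈ realMatrixSpec M ↔ (M - μ • (1 : Matrix n n ℝ)).det = 0 := by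
  have hmap : M.map Complex.ofReal - (μ : ℂ) • (1 : Matrix n n ℂ) =
      Complex.ofRealHom.mapMatrix (M - μ • 1) := by
    ext i j
    by_cases h : i = j <;> simp [h, one_apply]
  rw [realMatrixSpec, Set.mem_ofPred_eq, hmap, ← RingHom.map_det, Complex.ofRealHom_eq_coe,
    Complex.ofReal_eq_zero]

theorem ofReal_mem_realMatrixSpec_of_mulVec_eq_smul {M : Matrix n n ℝ} {μ : ℝ} {v : n → ℝ}
    (hv : v ≠ 0) (hMv : M *ᵥ v = μ • v) : (μ : ℂ) ∈ realMatrixSpec M :=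
  ofReal_mem_realMatrixSpec_iff.mpr <| exists_mulVec_eq_zero_iff.mp
    ⟨v, hv, by rw [sub_mulVec, hMv, smul_mulVec, one_mulVec, sub_self]⟩

theorem realMatrixSpec_fromBlocks_zero₁₂ {m : Type*} [Fintype m] [DecidableEq m]
    (A : Matrix m m ℝ) (C : Matrix n m ℝ) (D : Matrix n n ℝ) :
    realMatrixSpec (fromBlocks A 0 C D) = realMatrixSpec A ∪ realMatrixSpec D := by
  ext μ
  have hblock :
      (fromBlocks A 0 C D).map Complex.ofReal - μ • (1 : Matrix (m ⊕ n) (m ⊕ n) ℂ) =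
      fromBlocks (A.map Complex.ofReal - μ • 1) 0 (C.map Complex.ofReal)
        (D.map Complex.ofReal - μ • 1) := by
    ext (i | i) (j | j) <;> simp [one_apply]
  simp only [realMatrixSpec, Set.mem_union, Set.mem_ofPred_eq, hblock, det_fromBlocks_zero₁₂,
    mul_eq_zero]

end Spectrum

theorem cyclicMatrix_mulVec_one (N : ℕ) : cyclicMatrix N *ᵥ (fun _ => 1) = fun _ => 1 := by
  ext i
  have : NeZero N := ⟨by rintro rfl; exact i.elim0⟩
  have hentry : ∀ j : Fin N, cyclicMatrix N i j = if j = i - 1 then 1 else 0 := by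
    intro j
    refine if_congr ?_ rfl rfl
    rw [eq_sub_iff_add_eq, Fin.ext_iff, Fin.val_add, Fin.val_one', Nat.add_mod_mod, eq_comm]
  simp [mulVec, dotProduct, hentry]

theorem one_mem_realMatrixSpec_cyclicMatrix {N : ℕ} (hN : 0 < N) :
    (1 : ℂ) ∈ realMatrixSpec (cyclicMatrix N) := by
  have hv : (fun _ => 1 : Fin N → ℝ) ≠ 0 := fun h => one_ne_zero (congrFun h ⟨0, hN⟩)
  exact_mod_cast ofReal_mem_realMatrixSpec_of_mulVec_eq_smul hv
    (by rw [one_smul, cyclicMatrix_mulVec_one])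

theorem resRMN_cyclic_memory_edge_of_stability_general
    {Nm Nh : ℕ} (hNm : 0 < Nm)
    (O Wh : Matrix (Fin Nh) (Fin Nh) ℝ)
    (Wm : Matrix (Fin Nh) (Fin Nm) ℝ)
    (α β : ℝ)
    (D : Matrix (Fin Nh) (Fin Nh) ℝ)
    (J : Matrix (Fin Nm ⊕ Fin Nh) (Fin Nm ⊕ Fin Nh) ℝ)
    (hJ : J = Matrix.fromBlocks (cyclicMatrix Nm) 0
      (β • (D * Wm * cyclicMatrix Nm)) (α • O + β • (D * Wh))) :
    1 ≤ realMatrixSpecRad J := by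
  have hone : (1 : ℂ) ∈ realMatrixSpec J := by
    rw [hJ, realMatrixSpec_fromBlocks_zero₁₂]
    exact Or.inl (one_mem_realMatrixSpec_cyclicMatrix hNm)
  simpa using norm_le_realMatrixSpecRad hone

/-- when the memory recurrent matrix is the cyclic permutation matrix `C`,
the ResRMN Jacobian `J = [[C, 0], [β·D·W_m·C, α·O + β·D·W_h]]` (with `D` diagonal) has
spectral radius at least `1`, regardless of the tuning of the non-linear module. -/
theorem resRMN_cyclic_memory_edge_of_stability
    {Nm Nh : ℕ} (hNm : 0 < Nm)
    (O Wh : Matrix (Fin Nh) (Fin Nh) ℝ)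
    (Wm : Matrix (Fin Nh) (Fin Nm) ℝ)
    (α β : ℝ)
    (D : Matrix (Fin Nh) (Fin Nh) ℝ) (hD : D.IsDiag)
    (J : Matrix (Fin Nm ⊕ Fin Nh) (Fin Nm ⊕ Fin Nh) ℝ)
    (hJ : J = Matrix.fromBlocks (cyclicMatrix Nm) 0
      (β • (D * Wm * cyclicMatrix Nm)) (α • O + β • (D * Wh))) :
    1 ≤ realMatrixSpecRad J :=
  resRMN_cyclic_memory_edge_of_stability_general hNm O Wh Wm α β D J hJ
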